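/- Assume F separates points and let A be a shift subalgebra of A^D_{ħ,q}(F) (a *-subalgebra closed under left multiplication by elements of F). For any k ∈ Z^D, the cyclic A-submodule S_ħ^δ(|k⟩) of S_ħ(I,δ) generated by |k⟩ is a simple A-module. -/

import Mathlib

open scoped BigOperators

noncomputable section

abbrev V (D : ℕ) := Fin D → ℝ
abbrev L (D : ℕ) := Fin D → ℤ

def cz {D : ℕ} (n : L D) : V D := fun i => (n i : ℝ)

def Nr (D : ℕ) (x y : Fin D → ℝ) : ℝ :=
  ∑ m : Fin D, ∑ n : Fin D, if (n : ℕ) < (m : ℕ) then x m * y n else 0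

def Nz (D : ℕ) (k l : L D) : ℤ :=
  ∑ m : Fin D, ∑ n : Fin D, if (n : ℕ) < (m : ℕ) then k m * l n else 0

def Sh (D : ℕ) (hb : ℝ) (k : L D) (f : V D → ℂ) : V D → ℂ :=
  fun u => f (fun i => u i + hb * (k i : ℝ))

abbrev Alg (D : ℕ) := (L D) →₀ ((V D) → ℂ)

def amul (D : ℕ) (hb : ℝ) (q : ℂ) (a b : Alg D) : Alg D :=
  a.sum fun k f => b.sum fun l g =>
    Finsupp.single (k + l) ((q ^ (Nz D k l)) • (f * Sh D hb k g))

def astar (D : ℕ) (hb : ℝ) (q : ℂ) (a : Alg D) : Alg D :=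
  a.sum fun k f => Finsupp.single (-k) ((q ^ (Nz D (-k) (-k))) • Sh D hb (-k) (star f))

structure GoodF (D : ℕ) (hb : ℝ) (F : Set (V D → ℂ)) : Prop where
  zero_mem : (0 : V D → ℂ) ∈ F
  add_mem : ∀ f ∈ F, ∀ g ∈ F, f + g ∈ F
  mul_mem : ∀ f ∈ F, ∀ g ∈ F, f * g ∈ F
  smul_mem : ∀ (c : ℂ), ∀ f ∈ F, c • f ∈ F
  star_mem : ∀ f ∈ F, star f ∈ F
  shift_mem : ∀ (k : L D), ∀ f ∈ F, Sh D hb k f ∈ F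

def SeparatesPts (D : ℕ) (F : Set (V D → ℂ)) : Prop :=
  ∀ x y : V D, x ≠ y → ∃ f ∈ F, f x ≠ f y


abbrev DMod (D : ℕ) := (L D) →₀ ℂ

def Rinv {D : ℕ} (R : Matrix (Fin D) (Fin D) ℤ) : Matrix (Fin D) (Fin D) ℝ :=
  (R.map (Int.cast : ℤ → ℝ))⁻¹

def dact (D : ℕ) (hb : ℝ) (q : ℂ) (R : Matrix (Fin D) (Fin D) ℤ) (δ : V D)
    (a : Alg D) (v : DMod D) : DMod D :=
  a.sum fun n f => v.sum fun k c =>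
    Finsupp.single (k - R.mulVec n)
      ((q ^ (((Nr D ((Rinv R).mulVec (cz k) - cz n + δ) (cz n) : ℝ) : ℂ))) *
        f (hb • ((Rinv R).mulVec (cz k) - cz n + δ)) * c)

def DIso (D : ℕ) (hb : ℝ) (q : ℂ) (F : Set (V D → ℂ))
    (R : Matrix (Fin D) (Fin D) ℤ) (δ : V D)
    (R' : Matrix (Fin D) (Fin D) ℤ) (δ' : V D) : Prop :=
  ∃ φ : DMod D ≃ₗ[ℂ] DMod D,
    ∀ a : Alg D, (∀ k, a k ∈ F) → ∀ v : DMod D,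
      φ (dact D hb q R δ a v) = dact D hb q R' δ' a (φ v)


/-- A shift subalgebra: a *-subalgebra `A ⊆ A^D_{ħ,q}(F)` closed under left
multiplication by elements of `F`. -/
structure ShiftSubalg (D : ℕ) (hb : ℝ) (q : ℂ) (F : Set (V D → ℂ))
    (A : Set (Alg D)) : Prop where
  coeffs : ∀ a ∈ A, ∀ k, a k ∈ F
  add_mem : ∀ a ∈ A, ∀ b ∈ A, a + b ∈ A
  smul_mem : ∀ (c : ℂ), ∀ a ∈ A, c • a ∈ A
  mul_mem : ∀ a ∈ A, ∀ b ∈ A, amul D hb q a b ∈ A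
  star_mem : ∀ a ∈ A, astar D hb q a ∈ A
  fmul_mem : ∀ f ∈ F, ∀ a ∈ A, amul D hb q (Finsupp.single 0 f) a ∈ A

/-! For `v = b|k⟩ ≠ 0` the `k`-th coefficient of `b^* v` is `∑ₗ |v l|² > 0`: this is the
adjointness of `astar` with respect to the standard inner product on `S_ħ(1,δ)`, which holds
because `‖q‖ = 1`. Since `F` separates points and some coefficient of `b` is nonzero at a point
`ħ(l + δ)`, a function `g ∈ F` can take any prescribed values at the finitely many points
`ħ(m + δ)` with `m` in the support of `b^* v`; a suitable `g` projects `b^* v` onto `|k⟩`, so every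
`c|k⟩` is `(c g b^*) v`, the action being associative. -/

section Lattice

variable {D : ℕ}

lemma cz_add (k l : L D) : cz (k + l) = cz k + cz l := by
  funext i; simp [cz]

lemma cz_sub (k l : L D) : cz (k - l) = cz k - cz l := by
  funext i; simp [cz]

lemma cz_zero : cz (0 : L D) = 0 := by
  funext i; simp [cz]

lemma Nr_add_left (x y z : V D) : Nr D (x + y) z = Nr D x z + Nr D y z := by
  simp only [Nr, ← Finset.sum_add_distrib, Pi.add_apply, add_mul, ite_add_zero]

lemma Nr_add_right (x y z : V D) : Nr D x (y + z) = Nr D x y + Nr D x z := by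
  simp only [Nr, ← Finset.sum_add_distrib, Pi.add_apply, mul_add, ite_add_zero]

lemma Nr_neg_left (x y : V D) : Nr D (-x) y = -Nr D x y := by
  rw [eq_neg_iff_add_eq_zero, ← Nr_add_left, neg_add_cancel]
  simp [Nr]

lemma Nr_neg_right (x y : V D) : Nr D x (-y) = -Nr D x y := by
  rw [eq_neg_iff_add_eq_zero, ← Nr_add_right, neg_add_cancel]
  simp [Nr]

lemma Nr_sub_left (x y z : V D) : Nr D (x - y) z = Nr D x z - Nr D y z := by
  rw [sub_eq_add_neg, Nr_add_left, Nr_neg_left, sub_eq_add_neg]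

lemma Nr_sub_right (x y z : V D) : Nr D x (y - z) = Nr D x y - Nr D x z := by
  rw [sub_eq_add_neg, Nr_add_right, Nr_neg_right, sub_eq_add_neg]

lemma Nr_add_cocycle (x y z : V D) :
    Nr D x (y + z) + Nr D y z = Nr D x y + Nr D (x + y) z := by
  rw [Nr_add_right, Nr_add_left]
  ring

lemma Nr_zero_right (x : V D) : Nr D x 0 = 0 := by
  simp [Nr]

lemma Nz_cast (k l : L D) : (Nz D k l : ℝ) = Nr D (cz k) (cz l) := by
  simp only [Nz, Nr, cz, Int.cast_sum, apply_ite (Int.cast : ℤ → ℝ), Int.cast_mul, Int.cast_zero]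

end Lattice

section Phase

variable {q : ℂ}

lemma cpow_ofReal_add (hq : q ≠ 0) (x y : ℝ) :
    q ^ ((x + y : ℝ) : ℂ) = q ^ (x : ℂ) * q ^ (y : ℂ) := by
  rw [Complex.ofReal_add, Complex.cpow_add _ _ hq]

lemma zpow_eq_cpow_ofReal (n : ℤ) : q ^ n = q ^ ((n : ℝ) : ℂ) := by
  rw [Complex.ofReal_intCast, Complex.cpow_intCast]

lemma star_cpow_ofReal (hq : ‖q‖ = 1) (x : ℝ) : star (q ^ (x : ℂ)) = q ^ ((-x : ℝ) : ℂ) := by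
  have hq0 : q ≠ 0 := by rintro rfl; simp at hq
  have hlog : star (Complex.log q) = -Complex.log q := by
    apply Complex.ext <;> simp [Complex.log_re, Complex.log_im, hq]
  rw [Complex.cpow_def_of_ne_zero hq0, Complex.cpow_def_of_ne_zero hq0, Complex.star_def,
    ← Complex.exp_conj, map_mul, Complex.conj_ofReal, ← Complex.star_def, hlog]
  push_cast
  ring_nf

end Phase

section Action

variable {D : ℕ} {hb : ℝ} {q : ℂ} {δ : V D}

lemma Sh_apply (k : L D) (f : V D → ℂ) (x : V D) : Sh D hb k f x = f (x + hb • cz k) := rfl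

def latticePt (hb : ℝ) (δ : V D) (m : L D) : V D := hb • (cz m + δ)

lemma latticePt_add (m k : L D) :
    latticePt hb δ (m + k) = latticePt hb δ m + hb • cz k := by
  rw [latticePt, latticePt, cz_add, ← smul_add, add_right_comm]

lemma latticePt_injective (hb0 : hb ≠ 0) : Function.Injective (latticePt hb δ) := by
  intro m n h
  have hmn : cz m = cz n := add_left_injective δ (smul_right_injective (V D) hb0 h)
  funext i
  simpa [cz] using congrFun hmn i

lemma Rinv_one : Rinv (1 : Matrix (Fin D) (Fin D) ℤ) = 1 := by
  rw [Rinv, Matrix.map_one _ Int.cast_zero Int.cast_one, inv_one]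

lemma dact_one_apply (a : Alg D) (v : DMod D) (m : L D) :
    dact D hb q 1 δ a v m = ∑ n ∈ a.support, ∑ l ∈ v.support,
      if l = m + n then q ^ (Nr D (cz m + δ) (cz n) : ℂ) * a n (latticePt hb δ m) * v l
      else 0 := by
  simp only [dact, Rinv_one, Matrix.one_mulVec, Finsupp.sum, Finsupp.finsetSum_apply,
    Finsupp.single_apply, sub_eq_iff_eq_add]
  refine Finset.sum_congr rfl fun n _ => Finset.sum_congr rfl fun l _ => ?_
  split_ifs with h
  · rw [h, cz_add, add_sub_cancel_right, latticePt]
  · rfl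

lemma dact_one_apply_eq_sum_left (a : Alg D) (v : DMod D) (m : L D) {t : Finset (L D)}
    (ht : a.support ⊆ t) :
    dact D hb q 1 δ a v m =
      ∑ n ∈ t, q ^ (Nr D (cz m + δ) (cz n) : ℂ) * a n (latticePt hb δ m) * v (m + n) := by
  rw [dact_one_apply, Finset.sum_subset ht fun n _ hn => by simp [Finsupp.notMem_support_iff.mp hn]]
  refine Finset.sum_congr rfl fun n _ => ?_
  rw [Finset.sum_ite_eq']
  split_ifs with h
  · rfl
  · rw [Finsupp.notMem_support_iff.mp h, mul_zero]

lemma dact_one_apply_eq_sum_right (a : Alg D) (v : DMod D) (m : L D) {t : Finset (L D)}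
    (ht : v.support ⊆ t) :
    dact D hb q 1 δ a v m =
      ∑ l ∈ t, q ^ (Nr D (cz m + δ) (cz (l - m)) : ℂ) * a (l - m) (latticePt hb δ m) * v l := by
  rw [dact_one_apply, Finset.sum_comm,
    Finset.sum_subset ht fun l _ hl => by simp [Finsupp.notMem_support_iff.mp hl]]
  refine Finset.sum_congr rfl fun l _ => ?_
  simp_rw [eq_comm (a := l), ← eq_sub_iff_add_eq']
  rw [Finset.sum_ite_eq']
  split_ifs with h
  · rfl
  · rw [Finsupp.notMem_support_iff.mp h]
    simp

lemma dact_one_single_apply (b : Alg D) (k m : L D) :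
    dact D hb q 1 δ b (Finsupp.single k 1) m =
      q ^ (Nr D (cz m + δ) (cz (k - m)) : ℂ) * b (k - m) (latticePt hb δ m) := by
  rw [dact_one_apply_eq_sum_right _ _ _ Finsupp.support_single_subset, Finset.sum_singleton,
    Finsupp.single_eq_same, mul_one]

lemma dact_one_single_zero_apply (g : V D → ℂ) (w : DMod D) (m : L D) :
    dact D hb q 1 δ (Finsupp.single 0 g) w m = g (latticePt hb δ m) * w m := by
  rw [dact_one_apply_eq_sum_left _ _ _ Finsupp.support_single_subset, Finset.sum_singleton,
    Finsupp.single_eq_same, cz_zero, Nr_zero_right, Complex.ofReal_zero, Complex.cpow_zero,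
    one_mul, add_zero]

end Action

lemma Finset.sum_eq_sum_add_left_of_vanishing {G M : Type*} [AddCommGroup G] [AddCommMonoid M]
    {s t : Finset G} {f : G → M} (k : G) (hts : ∀ j ∈ t, k + j ∈ s)
    (hf : ∀ n ∈ s, n - k ∉ t → f n = 0) :
    ∑ n ∈ s, f n = ∑ j ∈ t, f (k + j) := by
  refine Finset.sum_bij_ne_zero (fun n _ _ => n - k) (fun n hn hfn => ?_)
    (fun _ _ _ _ _ _ h => sub_left_injective h)
    (fun j hj hfj => ⟨k + j, hts j hj, hfj, add_sub_cancel_left k j⟩)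
    (fun n _ _ => by rw [add_sub_cancel])
  by_contra hnt
  exact hfn (hf n hn hnt)

section Algebra

variable {D : ℕ} {hb : ℝ} {q : ℂ} {δ : V D}

open scoped Pointwise

lemma amul_apply (a b : Alg D) (n : L D) (x : V D) :
    amul D hb q a b n x =
      ∑ k ∈ a.support, q ^ Nz D k (n - k) * (a k x * b (n - k) (x + hb • cz k)) := by
  simp only [amul, Finsupp.sum, Finsupp.finsetSum_apply, Finset.sum_apply, Finsupp.single_apply,
    ite_apply, Pi.zero_apply, Pi.smul_apply, Pi.mul_apply, smul_eq_mul]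
  refine Finset.sum_congr rfl fun k _ => ?_
  simp_rw [← eq_sub_iff_add_eq']
  rw [Finset.sum_ite_eq']
  split_ifs with h
  · rfl
  · rw [Finsupp.notMem_support_iff.mp h]
    simp

lemma astar_apply (b : Alg D) (n : L D) (x : V D) :
    astar D hb q b n x = q ^ Nz D n n * star (b (-n) (x + hb • cz n)) := by
  simp only [astar, Finsupp.sum, Finsupp.finsetSum_apply, Finset.sum_apply, Finsupp.single_apply,
    ite_apply, Pi.zero_apply, Pi.smul_apply, smul_eq_mul]
  simp_rw [neg_eq_iff_eq_neg]
  rw [Finset.sum_ite_eq']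
  split_ifs with h
  · rw [neg_neg]
    rfl
  · rw [Finsupp.notMem_support_iff.mp h]
    simp

lemma support_amul_subset (a b : Alg D) :
    (amul D hb q a b).support ⊆ a.support + b.support := by
  intro n hn
  obtain ⟨x, hx⟩ := Function.ne_iff.mp (Finsupp.mem_support_iff.mp hn)
  rw [amul_apply] at hx
  obtain ⟨k, hk, hkx⟩ := Finset.exists_ne_zero_of_sum_ne_zero hx
  have hbk : b (n - k) ≠ 0 := fun h => hkx (by simp [h])
  exact Finset.mem_add.mpr ⟨k, hk, n - k, Finsupp.mem_support_iff.mpr hbk, add_sub_cancel k n⟩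

lemma cpow_Nr_mul_zpow_Nz (hq : q ≠ 0) (x : V D) (k j : L D) :
    q ^ (Nr D x (cz (k + j)) : ℂ) * q ^ Nz D k j =
      q ^ (Nr D x (cz k) : ℂ) * q ^ (Nr D (x + cz k) (cz j) : ℂ) := by
  rw [zpow_eq_cpow_ofReal, Nz_cast, ← cpow_ofReal_add hq, ← cpow_ofReal_add hq, cz_add,
    Nr_add_cocycle]

theorem dact_one_amul (hq : q ≠ 0) (a b : Alg D) (v : DMod D) :
    dact D hb q 1 δ (amul D hb q a b) v = dact D hb q 1 δ a (dact D hb q 1 δ b v) := by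
  ext m
  rw [dact_one_apply_eq_sum_left _ _ m (support_amul_subset a b),
    dact_one_apply_eq_sum_left _ _ m subset_rfl]
  simp_rw [amul_apply, Finset.mul_sum, Finset.sum_mul]
  rw [Finset.sum_comm]
  refine Finset.sum_congr rfl fun k hk => ?_
  rw [dact_one_apply_eq_sum_left b v (m + k) subset_rfl, Finset.mul_sum]
  refine Finset.sum_eq_sum_add_left_of_vanishing k
    (fun j hj => Finset.add_mem_add hk hj) (fun n _ hn => ?_) |>.trans ?_
  · rw [Finsupp.notMem_support_iff.mp hn]
    simp
  refine Finset.sum_congr rfl fun j _ => ?_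
  rw [add_sub_cancel_left, latticePt_add, ← add_assoc, cz_add m k, add_right_comm (cz m)]
  linear_combination (a k (latticePt hb δ m) * b j (latticePt hb δ m + hb • cz k) * v (m + k + j)) *
    cpow_Nr_mul_zpow_Nz hq (cz m + δ) k j

end Algebra

section Adjoint

variable {D : ℕ} {hb : ℝ} {q : ℂ} {δ : V D}

theorem dact_one_astar_apply_of_eq_single (hq : ‖q‖ = 1) (b : Alg D) (k : L D) {v : DMod D}
    (hv : v = dact D hb q 1 δ b (Finsupp.single k 1)) :
    dact D hb q 1 δ (astar D hb q b) v k = ∑ l ∈ v.support, (Complex.normSq (v l) : ℂ) := by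
  have hq0 : q ≠ 0 := by rintro rfl; simp at hq
  rw [dact_one_apply_eq_sum_right _ _ k subset_rfl]
  refine Finset.sum_congr rfl fun l _ => ?_
  have hvl : v l = q ^ (Nr D (cz l + δ) (cz (k - l)) : ℂ) * b (k - l) (latticePt hb δ l) := by
    rw [hv, dact_one_single_apply]
  have hphase : q ^ (Nr D (cz k + δ) (cz (l - k)) : ℂ) * q ^ Nz D (l - k) (l - k) =
      q ^ ((-Nr D (cz l + δ) (cz (k - l)) : ℝ) : ℂ) := by
    rw [zpow_eq_cpow_ofReal, Nz_cast, ← cpow_ofReal_add hq0]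
    simp only [cz_sub, Nr_add_left, Nr_sub_left, Nr_sub_right]
    ring_nf
  rw [astar_apply, ← latticePt_add, add_sub_cancel, neg_sub, Complex.normSq_eq_conj_mul_self,
    ← Complex.star_def, hvl, star_mul', star_cpow_ofReal hq]
  linear_combination (star (b (k - l) (latticePt hb δ l)) *
    (q ^ (Nr D (cz l + δ) (cz (k - l)) : ℂ) * b (k - l) (latticePt hb δ l))) * hphase

theorem dact_one_astar_apply_ne_zero (hq : ‖q‖ = 1) (b : Alg D) (k : L D)
    (hv : dact D hb q 1 δ b (Finsupp.single k 1) ≠ 0) :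
    dact D hb q 1 δ (astar D hb q b) (dact D hb q 1 δ b (Finsupp.single k 1)) k ≠ 0 := by
  rw [dact_one_astar_apply_of_eq_single hq b k rfl, ← Complex.ofReal_sum, Complex.ofReal_ne_zero]
  exact (Finset.sum_pos (fun l hl => Complex.normSq_pos.mpr (Finsupp.mem_support_iff.mp hl))
    (Finsupp.support_nonempty_iff.mpr hv)).ne'

end Adjoint

section Separation

variable {D : ℕ} {hb : ℝ} {F : Set (V D → ℂ)}

lemma GoodF.exists_eq_one_eq_zero (hF : GoodF D hb F) (hsep : SeparatesPts D F)
    {g : V D → ℂ} (hg : g ∈ F) {x y : V D} (hgx : g x ≠ 0) (hxy : x ≠ y) :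
    ∃ p ∈ F, p x = 1 ∧ p y = 0 := by
  obtain ⟨f, hf, hfxy⟩ := hsep x y hxy
  set p : V D → ℂ := f y • g + (-1 : ℂ) • (g * f) with hp
  have hpF : p ∈ F :=
    hF.add_mem _ (hF.smul_mem _ _ hg) _ (hF.smul_mem _ _ (hF.mul_mem _ hg _ hf))
  have hpx : p x = g x * (f y - f x) := by
    simp only [hp, Pi.add_apply, Pi.smul_apply, Pi.mul_apply, smul_eq_mul]
    ring
  have hpy : p y = 0 := by
    simp only [hp, Pi.add_apply, Pi.smul_apply, Pi.mul_apply, smul_eq_mul]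
    ring
  have hpx0 : p x ≠ 0 := hpx ▸ mul_ne_zero hgx (sub_ne_zero.mpr hfxy.symm)
  refine ⟨(p x)⁻¹ • p, hF.smul_mem _ _ hpF, inv_mul_cancel₀ hpx0, ?_⟩
  rw [Pi.smul_apply, hpy, smul_zero]

lemma GoodF.exists_eq_one_forall_eq_zero (hF : GoodF D hb F) (hsep : SeparatesPts D F)
    {g : V D → ℂ} (hg : g ∈ F) {x : V D} (hgx : g x ≠ 0) (T : Finset (V D)) (hxT : x ∉ T) :
    ∃ p ∈ F, p x = 1 ∧ ∀ y ∈ T, p y = 0 := by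
  induction T using Finset.induction_on with
  | empty => exact ⟨(g x)⁻¹ • g, hF.smul_mem _ _ hg, inv_mul_cancel₀ hgx, by simp⟩
  | insert y T _ ih =>
    obtain ⟨hxy, hxT⟩ := not_or.mp (Finset.mem_insert.not.mp hxT)
    obtain ⟨p, hpF, hpx, hpT⟩ := ih hxT
    obtain ⟨r, hrF, hrx, hry⟩ := hF.exists_eq_one_eq_zero hsep hg hgx hxy
    refine ⟨p * r, hF.mul_mem _ hpF _ hrF, by simp [hpx, hrx], ?_⟩
    rintro z hz
    rcases Finset.mem_insert.mp hz with rfl | hz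
    · simp [hry]
    · simp [hpT z hz]

end Separation

theorem exists_dact_one_single_zero_eq_single {D : ℕ} {hb : ℝ} {q : ℂ} {δ : V D}
    {F : Set (V D → ℂ)} (hb0 : hb ≠ 0) (hF : GoodF D hb F) (hsep : SeparatesPts D F)
    {f : V D → ℂ} (hf : f ∈ F) {l : L D} (hfl : f (latticePt hb δ l) ≠ 0)
    {w : DMod D} {k : L D} (hwk : w k ≠ 0) :
    ∃ g ∈ F, dact D hb q 1 δ (Finsupp.single 0 g) w = Finsupp.single k 1 := by
  have hshift : Sh D hb (l - k) f (latticePt hb δ k) ≠ 0 := by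
    rwa [Sh_apply, ← latticePt_add, add_sub_cancel]
  obtain ⟨p, hpF, hpk, hp⟩ := hF.exists_eq_one_forall_eq_zero hsep (hF.shift_mem _ _ hf) hshift
    ((w.support.erase k).image (latticePt hb δ))
    (by simp [(latticePt_injective hb0).eq_iff])
  refine ⟨(w k)⁻¹ • p, hF.smul_mem _ _ hpF, Finsupp.ext fun m => ?_⟩
  rw [dact_one_single_zero_apply, Pi.smul_apply, smul_eq_mul, Finsupp.single_apply]
  by_cases hmk : k = m
  · subst hmk
    rw [if_pos rfl, hpk, mul_one, inv_mul_cancel₀ hwk]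
  by_cases hwm : w m = 0
  · rw [hwm, mul_zero, if_neg hmk]
  rw [hp _ (Finset.mem_image_of_mem _ (Finset.mem_erase.mpr
    ⟨Ne.symm hmk, Finsupp.mem_support_iff.mpr hwm⟩)), if_neg hmk, mul_zero, zero_mul]

/-- Proposition 4.2: if `F` separates points and `A` is a shift subalgebra of
`A^D_{ħ,q}(F)`, then the cyclic `A`-submodule `A|k⟩ ⊆ S_ħ(1,δ)` generated by `|k⟩` is
simple: every nonzero element of it generates the whole module. -/
theorem stmt17 (D : ℕ) (hb : ℝ) (hhb : 0 < hb) (q : ℂ) (hq : ‖q‖ = 1)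
    (F : Set (V D → ℂ)) (hF : GoodF D hb F) (hsep : SeparatesPts D F)
    (A : Set (Alg D)) (hA : ShiftSubalg D hb q F A) (δ : V D) (k : L D) :
    ∀ v ∈ {w : DMod D | ∃ a ∈ A, w = dact D hb q 1 δ a (Finsupp.single k 1)},
      v ≠ 0 →
      ∀ w ∈ {w : DMod D | ∃ a ∈ A, w = dact D hb q 1 δ a (Finsupp.single k 1)},
        ∃ a ∈ A, dact D hb q 1 δ a v = w := by
  rintro v ⟨b, hbA, rfl⟩ hv w ⟨c, hcA, rfl⟩
  have hq0 : q ≠ 0 := by rintro rfl; simp at hq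
  obtain ⟨l, hl⟩ := Finsupp.ne_iff.mp hv
  have hbl : b (k - l) (latticePt hb δ l) ≠ 0 := fun h => hl (by
    rw [dact_one_single_apply, h, mul_zero, Finsupp.zero_apply])
  obtain ⟨g, hgF, hg⟩ := exists_dact_one_single_zero_eq_single hhb.ne' hF hsep
    (hA.coeffs b hbA (k - l)) hbl (dact_one_astar_apply_ne_zero hq b k hv)
  refine ⟨amul D hb q c (amul D hb q (Finsupp.single 0 g) (astar D hb q b)),
    hA.mul_mem _ hcA _ (hA.fmul_mem _ hgF _ (hA.star_mem _ hbA)), ?_⟩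
  rw [dact_one_amul hq0, dact_one_amul hq0, hg]
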